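/- arXiv:1101.5603 — 5 statements merged into one kernel-verified Lean document; each statement's English description precedes it below -/
import Mathlib

section
/- For any log-scale ℓ on a set X there exists a metric d on X and constants 0 < α < 1, c > 1 such that c⁻¹·α^{ℓ(x,y)} ≤ d(x,y) ≤ c·α^{ℓ(x,y)} for all x ≠ y. -/
/-- A log-scale on a set `X`: a symmetric function with values in `ℝ ∪ {∞}`
(modeled as `EReal`, never taking the value `⊥`), equal to `∞` exactly on the
diagonal, and satisfying the quasi-ultrametric inequality
`ℓ x z ≥ min (ℓ x y) (ℓ y z) - δ` for some constant `δ ≥ 0`. -/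
structure LogScale (X : Type*) where
  ℓ : X → X → EReal
  symm : ∀ x y, ℓ x y = ℓ y x
  ne_bot : ∀ x y, ℓ x y ≠ ⊥
  top_iff : ∀ x y, ℓ x y = ⊤ ↔ x = y
  δ : ℝ
  δ_nonneg : 0 ≤ δ
  quasi : ∀ x y z, ℓ x z ≥ min (ℓ x y) (ℓ y z) - (δ : EReal)


/-!
For `α < 1` the function `ρ = α ^ ℓ` satisfies `ρ x z ≤ K * max (ρ x y) (ρ y z)` with
`K = α ^ (-δ)`, and `K ^ 2 ≤ 2` once `α` is close enough to `1`. Applying this twice,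
`ρ x₁ x₄` is at most twice the largest of `ρ x₁ x₂`, `ρ x₂ x₃`, `ρ x₃ x₄`, which is what Frink's
chain argument needs: the largest pseudometric `d ≤ ρ` (the infimum of the `ρ`-lengths of
chains from `x` to `y`) then satisfies `ρ ≤ 2 * d`, so `d` is a metric comparable to `α ^ ℓ`.
-/

open NNReal

namespace EReal

/-- `α ^ a` for an extended real exponent, with `α ^ ⊤ = 0` (the limit when `α < 1`);
the value at `⊥` is junk. -/
noncomputable def nnrpow (α : ℝ≥0) (a : EReal) : ℝ≥0 :=
  if a = ⊤ then 0 else α ^ a.toReal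

variable {α : ℝ≥0}

@[simp]
theorem nnrpow_top (α : ℝ≥0) : nnrpow α ⊤ = 0 := if_pos rfl

@[simp]
theorem nnrpow_coe (α : ℝ≥0) (r : ℝ) : nnrpow α r = α ^ r := by
  simp [nnrpow]

theorem nnrpow_of_ne_top {a : EReal} (ha : a ≠ ⊤) : nnrpow α a = α ^ a.toReal := if_neg ha

theorem nnrpow_le_nnrpow_of_le (hα₀ : 0 < α) (hα₁ : α ≤ 1) {a b : EReal} (ha : a ≠ ⊥)
    (hab : a ≤ b) :
    nnrpow α b ≤ nnrpow α a := by
  by_cases hb : b = ⊤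
  · simp [hb]
  have ha' : a ≠ ⊤ := ne_top_of_le_ne_top hb hab
  rw [nnrpow_of_ne_top hb, nnrpow_of_ne_top ha']
  exact NNReal.rpow_le_rpow_of_exponent_ge hα₀ hα₁ (toReal_le_toReal hab ha hb)

theorem nnrpow_min (hα₀ : 0 < α) (hα₁ : α ≤ 1) {a b : EReal} (ha : a ≠ ⊥) (hb : b ≠ ⊥) :
    nnrpow α (min a b) = max (nnrpow α a) (nnrpow α b) := by
  rcases le_total a b with hab | hba
  · rw [min_eq_left hab, max_eq_left (nnrpow_le_nnrpow_of_le hα₀ hα₁ ha hab)]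
  · rw [min_eq_right hba, max_eq_right (nnrpow_le_nnrpow_of_le hα₀ hα₁ hb hba)]

theorem sub_coe_ne_bot {a : EReal} (ha : a ≠ ⊥) (δ : ℝ) : a - δ ≠ ⊥ := by
  rw [sub_eq_add_neg, ← coe_neg]
  exact add_ne_bot_iff.2 ⟨ha, coe_ne_bot _⟩

theorem nnrpow_sub_coe (hα₀ : α ≠ 0) {a : EReal} (ha : a ≠ ⊥) (δ : ℝ) :
    nnrpow α (a - δ) = α ^ (-δ) * nnrpow α a := by
  induction a using EReal.rec with
  | bot => exact absurd rfl ha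
  | top => simp
  | coe r => rw [← coe_sub, nnrpow_coe, nnrpow_coe, NNReal.rpow_sub hα₀, div_eq_mul_inv,
      ← NNReal.rpow_neg, mul_comm]

end EReal

section QuasiUltrametric

variable {X : Type*} {ρ : X → X → ℝ≥0} {K : ℝ≥0}

theorem le_two_mul_max_of_le_mul_max (hK : K ^ 2 ≤ 2)
    (hρ : ∀ x y z, ρ x z ≤ K * max (ρ x y) (ρ y z)) (x₁ x₂ x₃ x₄ : X) :
    ρ x₁ x₄ ≤ 2 * max (ρ x₁ x₂) (max (ρ x₂ x₃) (ρ x₃ x₄)) := by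
  set M := max (ρ x₁ x₂) (max (ρ x₂ x₃) (ρ x₃ x₄))
  have hK₂ : K ≤ 2 :=
    (pow_le_pow_iff_left₀ K.2 zero_le_two two_ne_zero).1
      (hK.trans (by norm_num : (2 : ℝ≥0) ≤ 2 ^ 2))
  have h₂₄ : ρ x₂ x₄ ≤ K * M := (hρ x₂ x₃ x₄).trans (by gcongr; exact le_max_right _ _)
  calc ρ x₁ x₄ ≤ K * max (ρ x₁ x₂) (ρ x₂ x₄) := hρ x₁ x₂ x₄
    _ ≤ K * max M (K * M) := by gcongr; exact le_max_left _ _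
    _ = max (K * M) (K ^ 2 * M) := by rw [mul_max, sq, mul_assoc]
    _ ≤ 2 * M := max_le (by gcongr) (by gcongr)

theorem exists_pseudometric_of_le_mul_max (hρ_self : ∀ x, ρ x x = 0)
    (hρ_comm : ∀ x y, ρ x y = ρ y x) (hK : K ^ 2 ≤ 2)
    (hρ : ∀ x y z, ρ x z ≤ K * max (ρ x y) (ρ y z)) :
    ∃ d : X → X → ℝ, (∀ x, d x x = 0) ∧ (∀ x y, d x y = d y x) ∧
      (∀ x y z, d x z ≤ d x y + d y z) ∧ ∀ x y, d x y ≤ ρ x y ∧ ρ x y ≤ 2 * d x y := by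
  let := PseudoMetricSpace.ofPreNNDist ρ hρ_self hρ_comm
  exact ⟨dist, dist_self, dist_comm, dist_triangle, fun x y =>
    ⟨PseudoMetricSpace.dist_ofPreNNDist_le ρ hρ_self hρ_comm x y,
      PseudoMetricSpace.le_two_mul_dist_ofPreNNDist ρ hρ_self hρ_comm
        (le_two_mul_max_of_le_mul_max hK hρ) x y⟩⟩

end QuasiUltrametric

theorem NNReal.exists_rpow_neg_sq_le_two {δ : ℝ} (hδ : 0 ≤ δ) :
    ∃ α : ℝ≥0, 0 < α ∧ α < 1 ∧ (α ^ (-δ)) ^ 2 ≤ 2 := by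
  refine ⟨2 ^ (-(2 * (δ + 1))⁻¹), by positivity,
    NNReal.rpow_lt_one_of_one_lt_of_neg one_lt_two (neg_neg_of_pos (by positivity)), ?_⟩
  rw [← NNReal.rpow_natCast, ← NNReal.rpow_mul, ← NNReal.rpow_mul]
  conv_rhs => rw [← NNReal.rpow_one 2]
  refine NNReal.rpow_le_rpow_of_exponent_le one_le_two ?_
  field_simp
  push_cast
  linarith

namespace LogScale

variable {X : Type*} (L : LogScale X) (α : ℝ≥0)

noncomputable def rpow (x y : X) : ℝ≥0 := EReal.nnrpow α (L.ℓ x y)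

theorem rpow_self (x : X) : L.rpow α x x = 0 := by
  simp [rpow, (L.top_iff x x).2 rfl]

theorem rpow_comm (x y : X) : L.rpow α x y = L.rpow α y x := by
  rw [rpow, rpow, L.symm]

theorem rpow_of_ne {x y : X} (h : x ≠ y) : L.rpow α x y = α ^ (L.ℓ x y).toReal :=
  EReal.nnrpow_of_ne_top fun ht => h ((L.top_iff x y).1 ht)

variable {α}

theorem rpow_le_mul_max (hα₀ : 0 < α) (hα₁ : α ≤ 1) (x y z : X) :
    L.rpow α x z ≤ α ^ (-L.δ) * max (L.rpow α x y) (L.rpow α y z) := by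
  have hmin : min (L.ℓ x y) (L.ℓ y z) ≠ ⊥ := by simp [L.ne_bot]
  calc L.rpow α x z ≤ EReal.nnrpow α (min (L.ℓ x y) (L.ℓ y z) - L.δ) :=
        EReal.nnrpow_le_nnrpow_of_le hα₀ hα₁
          (EReal.sub_coe_ne_bot hmin _) (L.quasi x y z)
    _ = α ^ (-L.δ) * max (L.rpow α x y) (L.rpow α y z) := by
      rw [EReal.nnrpow_sub_coe hα₀.ne' hmin,
        EReal.nnrpow_min hα₀ hα₁ (L.ne_bot x y) (L.ne_bot y z)]
      rfl

end LogScale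

/-- For any log-scale `ℓ` on a set `X` there exists a metric `d` on `X` and
constants `0 < α < 1`, `c > 1` such that
`c⁻¹ · α ^ (ℓ x y) ≤ d x y ≤ c · α ^ (ℓ x y)` for all `x ≠ y`. -/
theorem logScale_exists_associated_metric {X : Type*} (L : LogScale X) :
    ∃ (d : X → X → ℝ) (α c : ℝ),
      (∀ x, d x x = 0) ∧
      (∀ x y, d x y = d y x) ∧
      (∀ x y, x ≠ y → 0 < d x y) ∧
      (∀ x y z, d x z ≤ d x y + d y z) ∧
      0 < α ∧ α < 1 ∧ 1 < c ∧
      ∀ x y, x ≠ y →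
        c⁻¹ * α ^ ((L.ℓ x y).toReal) ≤ d x y ∧
        d x y ≤ c * α ^ ((L.ℓ x y).toReal) := by
  obtain ⟨α, hα₀, hα₁, hK⟩ := NNReal.exists_rpow_neg_sq_le_two L.δ_nonneg
  obtain ⟨d, d_self, d_comm, d_triangle, hd⟩ := exists_pseudometric_of_le_mul_max
    (L.rpow_self α) (L.rpow_comm α) hK (L.rpow_le_mul_max hα₀ hα₁.le)
  have hd_rpow : ∀ x y, x ≠ y →
      d x y ≤ (α : ℝ) ^ (L.ℓ x y).toReal ∧ (α : ℝ) ^ (L.ℓ x y).toReal ≤ 2 * d x y := by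
    intro x y hxy
    simpa [L.rpow_of_ne α hxy] using hd x y
  have hpos : ∀ x y, 0 < (α : ℝ) ^ (L.ℓ x y).toReal := fun x y => by positivity
  refine ⟨d, α, 2, d_self, d_comm, fun x y hxy => ?_, d_triangle, hα₀, hα₁, one_lt_two,
    fun x y hxy => ?_⟩
  · linarith [(hd_rpow x y hxy).2, hpos x y]
  · obtain ⟨h_le, h_ge⟩ := hd_rpow x y hxy
    constructor <;> linarith [hpos x y]
end

section
/- Let ℓ be a log-scale on X with constant δ. If (x_n) and (y_n) are non-equivalent Cauchy sequences (i.e., ℓ(x_n, y_n) does not tend to ∞), then there exists Δ > 0 such that any two partial limits of the sequence ℓ(x_n, y_n) differ by at most Δ. -/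
open Filter

theorem EReal.le_add_of_mapClusterPt {ι : Type*} {l : Filter ι} {u : ι → EReal} {c : ℝ}
    (h : ∀ r : ℝ, ∀ᶠ p in l ×ˢ l, (r : EReal) < u p.1 → ((r - c : ℝ) : EReal) ≤ u p.2)
    {a b : EReal} (ha : MapClusterPt a l u) (hb : MapClusterPt b l u) : a ≤ b + c := by
  by_contra! hba
  obtain ⟨r, hbr, hra⟩ := EReal.exists_between_coe_real hba
  have hb' : b < ((r - c : ℝ) : EReal) := by
    rw [EReal.coe_sub]
    exact (EReal.lt_sub_iff_add_lt (.inl (EReal.coe_ne_bot c)) (.inl (EReal.coe_ne_top c))).2 hbr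
  obtain ⟨s, hs, t, ht, hst⟩ := eventually_prod_iff.1 (h r)
  obtain ⟨n, hn, hsn⟩ :=
    ((mapClusterPt_iff_frequently.1 ha _ (Ioi_mem_nhds hra)).and_eventually hs).exists
  obtain ⟨m, hm, htm⟩ :=
    ((mapClusterPt_iff_frequently.1 hb _ (Iio_mem_nhds hb')).and_eventually ht).exists
  exact (hst hsn htm hn).not_gt hm

namespace LogScale

variable {X : Type*} (L : LogScale X)

theorem coe_sub_le {r : ℝ} {x y z : X} (hxy : (r : EReal) ≤ L.ℓ x y)
    (hyz : (r : EReal) ≤ L.ℓ y z) : ((r - L.δ : ℝ) : EReal) ≤ L.ℓ x z :=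
  calc ((r - L.δ : ℝ) : EReal) = r - L.δ := EReal.coe_sub r L.δ
    _ ≤ min (L.ℓ x y) (L.ℓ y z) - L.δ := EReal.sub_le_sub (le_min hxy hyz) le_rfl
    _ ≤ L.ℓ x z := L.quasi x y z

theorem coe_sub_two_mul_le {r : ℝ} {a b c d : X} (hab : (r : EReal) ≤ L.ℓ a b)
    (hbc : (r : EReal) ≤ L.ℓ b c) (hcd : (r : EReal) ≤ L.ℓ c d) :
    ((r - 2 * L.δ : ℝ) : EReal) ≤ L.ℓ a d := by
  have hab' : ((r - L.δ : ℝ) : EReal) ≤ L.ℓ a b :=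
    le_trans (EReal.coe_le_coe_iff.2 (by linarith [L.δ_nonneg])) hab
  have had := L.coe_sub_le hab' (L.coe_sub_le hbc hcd)
  rwa [sub_sub, ← two_mul] at had

theorem eventually_coe_sub_two_mul_le_of_tendsto {x y : ℕ → X}
    (hx : Tendsto (fun p : ℕ × ℕ => L.ℓ (x p.1) (x p.2)) atTop (nhds ⊤))
    (hy : Tendsto (fun p : ℕ × ℕ => L.ℓ (y p.1) (y p.2)) atTop (nhds ⊤)) (r : ℝ) :
    ∀ᶠ p : ℕ × ℕ in atTop ×ˢ atTop,
      (r : EReal) < L.ℓ (x p.1) (y p.1) → ((r - 2 * L.δ : ℝ) : EReal) ≤ L.ℓ (x p.2) (y p.2) := by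
  rw [prod_atTop_atTop_eq]
  filter_upwards [hx.eventually (eventually_ge_nhds (EReal.coe_lt_top r)),
    hy.eventually (eventually_ge_nhds (EReal.coe_lt_top r))] with p hxp hyp hxyp
  exact L.coe_sub_two_mul_le (L.symm _ _ ▸ hxp) hxyp.le hyp

end LogScale

theorem partial_limits_of_nonequivalent_cauchy_general {X : Type*} (L : LogScale X)
    (x y : ℕ → X)
    (hx : Tendsto (fun p : ℕ × ℕ => L.ℓ (x p.1) (x p.2)) atTop (nhds ⊤))
    (hy : Tendsto (fun p : ℕ × ℕ => L.ℓ (y p.1) (y p.2)) atTop (nhds ⊤)) :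
    ∃ Δ : ℝ, 0 < Δ ∧ ∀ a b : EReal,
      MapClusterPt a atTop (fun n => L.ℓ (x n) (y n)) →
      MapClusterPt b atTop (fun n => L.ℓ (x n) (y n)) →
      a ≤ b + (Δ : EReal) := by
  refine ⟨2 * L.δ + 1, by linarith [L.δ_nonneg], fun a b ha hb => ?_⟩
  calc a ≤ b + (2 * L.δ : ℝ) :=
        EReal.le_add_of_mapClusterPt (L.eventually_coe_sub_two_mul_le_of_tendsto hx hy) ha hb
    _ ≤ b + (2 * L.δ + 1 : ℝ) := by gcongr; exact_mod_cast (lt_add_one _).le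

/-- If `(x n)` and `(y n)` are non-equivalent Cauchy sequences for a log-scale `ℓ`
(Cauchy: `ℓ (x n) (x m) → ∞`; non-equivalent: `ℓ (x n) (y n)` does not tend to `∞`),
then there is `Δ > 0` such that any two partial limits of the sequence
`ℓ (x n) (y n)` differ by at most `Δ`. -/
theorem partial_limits_of_nonequivalent_cauchy {X : Type*} (L : LogScale X)
    (x y : ℕ → X)
    (hx : Tendsto (fun p : ℕ × ℕ => L.ℓ (x p.1) (x p.2)) atTop (nhds ⊤))
    (hy : Tendsto (fun p : ℕ × ℕ => L.ℓ (y p.1) (y p.2)) atTop (nhds ⊤))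
    (hne : ¬ Tendsto (fun n => L.ℓ (x n) (y n)) atTop (nhds ⊤)) :
    ∃ Δ : ℝ, 0 < Δ ∧ ∀ a b : EReal,
      MapClusterPt a atTop (fun n => L.ℓ (x n) (y n)) →
      MapClusterPt b atTop (fun n => L.ℓ (x n) (y n)) →
      a ≤ b + (Δ : EReal) :=
  partial_limits_of_nonequivalent_cauchy_general L x y hx hy
end

section
/- Let Γ be a directed graph with a quasi-cocycle ν with constants Δ, η such that ν(v,u) > 2η for every directed edge from v to u. Then every directed path (x₀, x₁, …, x_n) in Γ satisfies η(j−i) < ν(x_i, x_j) < (Δ+η)(j−i) + η for all i < j, and hence is a ((Δ+η)/η, 1)-quasi-geodesic. -/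
/-! Along a directed edge the quasi-cocycle grows by more than `2η` and by at most `Δ`, and each
application of the quasi-cocycle inequality costs at most `η`; so along a directed path `ν` grows
at least like `η` and at most like `Δ + η` per step. Since `ν u u ≤ η`, distinct indices give
distinct vertices, and along any undirected walk between them `ν` grows by at most `Δ + η` per
step, hence `η (j - i) < ν (x i) (x j) ≤ (Δ + η) d(x i, x j) - η`. -/

theorem Fin.lt_induction {n : ℕ} {P : Fin (n + 1) → Fin (n + 1) → Prop}
    (edge : ∀ k : Fin n, P k.castSucc k.succ)
    (step : ∀ (i : Fin (n + 1)) (k : Fin n), P i k.castSucc → P i k.succ) :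
    ∀ i j, i < j → P i j := by
  intro i j
  induction j using Fin.induction with
  | zero => exact fun h => absurd h (Fin.not_lt_zero i)
  | succ k ih =>
    intro hik
    rcases (Fin.le_castSucc_iff.mpr hik).eq_or_lt with rfl | hlt
    · exact edge k
    · exact step i k (ih hlt)

namespace SimpleGraph

variable {V : Type*} {E : V → V → Prop} {u v : V}

theorem reachable_fromRel (h : E u v) : (fromRel E).Reachable u v := by
  by_cases huv : u = v
  · exact huv ▸ Reachable.refl u
  · exact ((fromRel_adj E u v).mpr ⟨huv, Or.inl h⟩).reachable

theorem dist_fromRel_le_one (h : E u v) : (fromRel E).dist u v ≤ 1 := by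
  by_cases huv : u = v
  · simp [huv]
  · exact (dist_eq_one_iff_adj.mpr ((fromRel_adj E u v).mpr ⟨huv, Or.inl h⟩)).le

theorem reachable_fromRel_of_path {n : ℕ} {x : Fin (n + 1) → V}
    (hpath : ∀ k : Fin n, E (x k.castSucc) (x k.succ)) {i j : Fin (n + 1)} (hij : i < j) :
    (fromRel E).Reachable (x i) (x j) :=
  Fin.lt_induction (P := fun i j => (fromRel E).Reachable (x i) (x j))
    (fun k => reachable_fromRel (hpath k))
    (fun _ k h => h.trans (reachable_fromRel (hpath k))) i j hij

end SimpleGraph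

namespace QuasiCocycle

variable {V : Type*} {ν : V → V → ℝ} {Δ η : ℝ}

theorem apply_self_le (hlow : ∀ u v w, ν u v + ν v w - η ≤ ν u w) (u : V) :
    ν u u ≤ η := by
  linarith [hlow u u u]

section Walk

variable {G : SimpleGraph V} (hup : ∀ u v w, ν u w ≤ ν u v + ν v w + η)
  (hadj : ∀ u v, G.Adj u v → ν u v ≤ Δ)
include hup hadj

theorem le_mul_length_sub {u v : V} (w : G.Walk u v) (hw : w.length ≠ 0) :
    ν u v ≤ (Δ + η) * w.length - η := by
  induction w with
  | nil => exact absurd rfl hw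
  | @cons a b c hab w ih =>
    rw [SimpleGraph.Walk.length_cons, Nat.cast_succ]
    by_cases hw' : w.length = 0
    · obtain rfl := SimpleGraph.Walk.eq_of_length_eq_zero hw'
      rw [hw', Nat.cast_zero]
      linarith [hadj a b hab]
    · linarith [hup a b c, hadj a b hab, ih hw']

theorem le_mul_dist_sub {u v : V} (hne : u ≠ v) (hr : G.Reachable u v) :
    ν u v ≤ (Δ + η) * G.dist u v - η := by
  obtain ⟨w, hw⟩ := hr.exists_walk_length_eq_dist
  rw [← hw]
  exact le_mul_length_sub hup hadj w fun h => hne (SimpleGraph.Walk.eq_of_length_eq_zero h)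

end Walk

section Path

variable {E : V → V → Prop} {n : ℕ} {x : Fin (n + 1) → V}
  (hpath : ∀ k : Fin n, E (x k.castSucc) (x k.succ))
include hpath

theorem mul_sub_lt_of_path (hη : 0 ≤ η) (hlow : ∀ u v w, ν u v + ν v w - η ≤ ν u w)
    (hdir : ∀ u v, E u v → 2 * η < ν u v) :
    ∀ i j : Fin (n + 1), i < j →
      η * (((j : ℕ) : ℝ) - ((i : ℕ) : ℝ)) < ν (x i) (x j) := by
  refine Fin.lt_induction (fun k => ?_) (fun i k ih => ?_)
  · simp only [Fin.val_succ, Fin.val_castSucc, Nat.cast_succ, add_sub_cancel_left, mul_one]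
    linarith [hdir _ _ (hpath k)]
  · simp only [Fin.val_succ, Fin.val_castSucc, Nat.cast_succ] at ih ⊢
    linarith [hdir _ _ (hpath k), hlow (x i) (x k.castSucc) (x k.succ)]

theorem lt_mul_sub_add_of_path (hη : 0 < η) (hup : ∀ u v w, ν u w ≤ ν u v + ν v w + η)
    (hedge : ∀ u v, E u v → ν u v ≤ Δ) :
    ∀ i j : Fin (n + 1), i < j →
      ν (x i) (x j) < (Δ + η) * (((j : ℕ) : ℝ) - ((i : ℕ) : ℝ)) + η := by
  refine Fin.lt_induction (fun k => ?_) (fun i k ih => ?_)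
  · simp only [Fin.val_succ, Fin.val_castSucc, Nat.cast_succ, add_sub_cancel_left, mul_one]
    linarith [hedge _ _ (hpath k)]
  · simp only [Fin.val_succ, Fin.val_castSucc, Nat.cast_succ] at ih ⊢
    linarith [hedge _ _ (hpath k), hup (x i) (x k.castSucc) (x k.succ)]

end Path

end QuasiCocycle

open QuasiCocycle SimpleGraph

theorem directed_path_is_quasigeodesic_general {V : Type*} (E : V → V → Prop)
    (ν : V → V → ℝ) (Δ η : ℝ) (hη : 0 < η)
    (hadj : ∀ u v : V, (E u v ∨ E v u) → |ν u v| ≤ Δ)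
    (hq : ∀ u v w : V, ν u v + ν v w - η ≤ ν u w ∧ ν u w ≤ ν u v + ν v w + η)
    (hdir : ∀ u v : V, E u v → 2 * η < ν u v)
    (n : ℕ) (x : Fin (n + 1) → V)
    (hpath : ∀ i : Fin n, E (x i.castSucc) (x i.succ)) :
    (∀ i : Fin n, (SimpleGraph.fromRel E).dist (x i.castSucc) (x i.succ) ≤ 1) ∧
    ∀ i j : Fin (n + 1), i < j →
      (η * (((j : ℕ) : ℝ) - ((i : ℕ) : ℝ)) < ν (x i) (x j) ∧
        ν (x i) (x j) < (Δ + η) * (((j : ℕ) : ℝ) - ((i : ℕ) : ℝ)) + η) ∧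
      ((j : ℕ) : ℝ) - ((i : ℕ) : ℝ) ≤
        ((Δ + η) / η) * ((SimpleGraph.fromRel E).dist (x i) (x j) : ℝ) := by
  have hlow u v w := (hq u v w).1
  have hup u v w := (hq u v w).2
  have hedge u v (h : E u v ∨ E v u) : ν u v ≤ Δ := (le_abs_self _).trans (hadj u v h)
  refine ⟨fun k => dist_fromRel_le_one (hpath k), fun i j hij => ?_⟩
  have hgrow := mul_sub_lt_of_path hpath hη.le hlow hdir i j hij
  have hbound := lt_mul_sub_add_of_path hpath hη hup (fun u v h => hedge u v (Or.inl h)) i j hij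
  refine ⟨⟨hgrow, hbound⟩, ?_⟩
  have hne : x i ≠ x j := by
    intro hij_eq
    have hone : (1 : ℝ) ≤ ((j : ℕ) : ℝ) - ((i : ℕ) : ℝ) := by
      rw [le_sub_iff_add_le', ← Nat.cast_succ]; exact_mod_cast hij
    rw [← hij_eq] at hgrow
    nlinarith [apply_self_le hlow (x i)]
  have hdist := le_mul_dist_sub hup (fun u v h => hedge u v ((fromRel_adj E u v).mp h).2) hne
    (reachable_fromRel_of_path hpath hij)
  rw [div_mul_eq_mul_div, le_div_iff₀ hη]
  linarith

/-- Let `Γ` be a directed graph (edge relation `E`) with a quasi-cocycle `ν`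
with constants `Δ`, `η`, such that `ν v u > 2η` for every directed edge `(v,u)`.
Then every directed path `x₀, x₁, …, x_n` satisfies
`η(j−i) < ν (x i) (x j) < (Δ+η)(j−i) + η` for all `i < j`; consecutive vertices
are within distance `1` in the underlying (symmetrized) graph, and
`j − i ≤ ((Δ+η)/η) · d(x i, x j)`, i.e. the path is a `((Δ+η)/η, 1)`-quasi-geodesic. -/
theorem directed_path_is_quasigeodesic {V : Type*} (E : V → V → Prop)
    (ν : V → V → ℝ) (Δ η : ℝ) (hΔ : 0 < Δ) (hη : 0 < η)
    (hadj : ∀ u v : V, (E u v ∨ E v u) → |ν u v| ≤ Δ)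
    (hq : ∀ u v w : V, ν u v + ν v w - η ≤ ν u w ∧ ν u w ≤ ν u v + ν v w + η)
    (hdir : ∀ u v : V, E u v → 2 * η < ν u v)
    (n : ℕ) (x : Fin (n + 1) → V)
    (hpath : ∀ i : Fin n, E (x i.castSucc) (x i.succ)) :
    (∀ i : Fin n, (SimpleGraph.fromRel E).dist (x i.castSucc) (x i.succ) ≤ 1) ∧
    ∀ i j : Fin (n + 1), i < j →
      (η * (((j : ℕ) : ℝ) - ((i : ℕ) : ℝ)) < ν (x i) (x j) ∧
        ν (x i) (x j) < (Δ + η) * (((j : ℕ) : ℝ) - ((i : ℕ) : ℝ)) + η) ∧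
      ((j : ℕ) : ℝ) - ((i : ℕ) : ℝ) ≤
        ((Δ + η) / η) * ((SimpleGraph.fromRel E).dist (x i) (x j) : ℝ) :=
  directed_path_is_quasigeodesic_general E ν Δ η hη hadj hq hdir n x hpath
end

section
/- For a rectangle (R, [·,·]) and any point x ∈ R, the map (y, z) ↦ [y, z] from P₁(R,x) × P₂(R,x) to R is a homeomorphism, with inverse z ↦ ([z,x], [x,z]). -/
/-- A rectangle: a topological space `R` with a continuous map `[·,·] : R × R → R`
satisfying `[x,x] = x`, `[x,[y,z]] = [x,z]` and `[[x,y],z] = [x,z]`. -/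
structure RectangleStruct (R : Type*) [TopologicalSpace R] where
  br : R → R → R
  continuous : Continuous fun p : R × R => br p.1 p.2
  br_self : ∀ x, br x x = x
  br_right : ∀ x y z, br x (br y z) = br x z
  br_left : ∀ x y z, br (br x y) z = br x z

/-- For a rectangle `(R, [·,·])` and any point `x ∈ R`, the map
`(y,z) ↦ [y,z]` from `P₁(R,x) × P₂(R,x)` to `R` is a homeomorphism, with
inverse `z ↦ ([z,x], [x,z])`. -/
theorem rectangle_product_decomposition {R : Type*} [TopologicalSpace R]
    (S : RectangleStruct R) (x : R) :
    ∃ h : ({y : R // S.br x y = x} × {y : R // S.br x y = y}) ≃ₜ R,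
      (∀ p : {y : R // S.br x y = x} × {y : R // S.br x y = y},
        h p = S.br p.1.1 p.2.1) ∧
      (∀ z : R, ((h.symm z).1 : R) = S.br z x ∧ ((h.symm z).2 : R) = S.br x z) := by
  have hbr : Continuous fun p : R × R => S.br p.1 p.2 := S.continuous
  refine ⟨{
    toFun := fun p => S.br p.1.1 p.2.1
    invFun := fun z => (⟨S.br z x, by rw [S.br_right, S.br_self]⟩,
      ⟨S.br x z, by rw [S.br_right]⟩)
    left_inv := by
      rintro ⟨⟨y, hy⟩, ⟨z, hz⟩⟩
      ext
      · show S.br (S.br y z) x = y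
        rw [S.br_left]
        conv_lhs => rw [← hy]
        rw [S.br_right, S.br_self]
      · show S.br x (S.br y z) = z
        rw [S.br_right, hz]
    right_inv := by
      intro z
      show S.br (S.br z x) (S.br x z) = z
      rw [S.br_left, S.br_right, S.br_self]
    continuous_toFun := hbr.comp
      ((continuous_subtype_val.comp continuous_fst).prodMk
        (continuous_subtype_val.comp continuous_snd))
    continuous_invFun := by
      apply Continuous.prodMk
      · exact Continuous.subtype_mk (hbr.comp (continuous_id.prodMk continuous_const)) _
      · exact Continuous.subtype_mk (hbr.comp (continuous_const.prodMk continuous_id)) _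
  }, fun p => rfl, fun z => ⟨rfl, rfl⟩⟩
end

section
/- Let Γ be a Gromov hyperbolic graph, ω a point of its boundary, and for vertices u, v let ℓ(u,v) be the minimal value of the Busemann function λ(·) = β_ω(·, x₀) along a chosen geodesic from u to v. Then there exists a constant c > 0 (independent of u, v, and the choice of geodesics) such that |ℓ(u,v) − ℓ_{ω,x₀}(u,v)| < c, where ℓ_{ω,x₀}(u,v) = ½(β_ω(u,x₀) + β_ω(v,x₀) − d(u,v)). -/
/-!
For large `N` the Busemann function `λ` is `2δ`-close to `x ↦ d(x, w N) - d(x₀, w N)`, and by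
finiteness one `N` serves every vertex of a geodesic `[u, v]`. With `z = w N`, the minimum of `λ`
on `[u, v]` therefore measures `d(z, [u, v])`, which equals the Gromov product `(u | v)_z` up to
`4δ + 1`: the triangle inequality bounds it below, and the four-point condition at the vertex of
`[u, v]` nearest to the point at distance `(v | z)_u` from `u` bounds it above.
-/

open Filter

/-- The Gromov product in a connected graph, with respect to the graph distance
and a base vertex `x₀`. -/
noncomputable def graphGromovProd {V : Type*} (G : SimpleGraph V) (x₀ x y : V) : ℝ :=
  ((G.dist x₀ x : ℝ) + (G.dist x₀ y : ℝ) - (G.dist x y : ℝ)) / 2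

namespace SimpleGraph

variable {V : Type*} {G : SimpleGraph V}

namespace Walk

variable {u v x : V} {p : G.Walk u v}

lemma dist_add_dist_of_mem_support (hp : p.length = G.dist u v) (hx : x ∈ p.support) :
    G.dist u x + G.dist x v = G.dist u v := by
  classical
  rw [← length_eq_dist_of_subwalk hp (p.isSubwalk_takeUntil hx),
    ← length_eq_dist_of_subwalk hp (p.isSubwalk_dropUntil hx), ← hp, ← length_append,
    take_spec]

lemma dist_getVert_of_le_length (hp : p.length = G.dist u v) {n : ℕ} (hn : n ≤ p.length) :
    G.dist u (p.getVert n) = n := by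
  rw [← length_eq_dist_of_subwalk hp (p.isSubwalk_take n), take_length, min_eq_left hn]

lemma dist_add_dist_le_of_mem_support (hconn : G.Connected) (hp : p.length = G.dist u v)
    (hx : x ∈ p.support) (z : V) :
    (G.dist u z : ℝ) + G.dist v z ≤ G.dist u v + 2 * G.dist x z := by
  have hux : (G.dist u z : ℝ) ≤ G.dist u x + G.dist x z := by exact_mod_cast hconn.dist_triangle
  have hvx : (G.dist v z : ℝ) ≤ G.dist x v + G.dist x z := by
    rw [dist_comm (u := x)]; exact_mod_cast hconn.dist_triangle
  have hsplit : (G.dist u x : ℝ) + G.dist x v = G.dist u v := by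
    exact_mod_cast dist_add_dist_of_mem_support hp hx
  linarith

end Walk

lemma graphGromovProd_comm (x₀ a b : V) : graphGromovProd G x₀ a b = graphGromovProd G x₀ b a := by
  rw [graphGromovProd, graphGromovProd, dist_comm (u := a)]
  ring

lemma Connected.graphGromovProd_le_dist (hconn : G.Connected) (x₀ a b : V) :
    graphGromovProd G x₀ a b ≤ G.dist x₀ a := by
  have : (G.dist x₀ b : ℝ) ≤ G.dist x₀ a + G.dist a b := by exact_mod_cast hconn.dist_triangle
  rw [graphGromovProd]
  linarith

def GromovHyperbolicAt (G : SimpleGraph V) (x₀ : V) (δ : ℝ) : Prop :=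
  ∀ x y z : V, graphGromovProd G x₀ x z ≥
    min (graphGromovProd G x₀ x y) (graphGromovProd G x₀ y z) - δ

namespace GromovHyperbolicAt

variable {x₀ : V} {δ : ℝ}

lemma nonneg (h : GromovHyperbolicAt G x₀ δ) : 0 ≤ δ := by
  simpa using h x₀ x₀ x₀

lemma min_sub_le_add (h : GromovHyperbolicAt G x₀ δ) (a b c e : V) :
    min (graphGromovProd G x₀ a c + graphGromovProd G x₀ b e)
        (graphGromovProd G x₀ b c + graphGromovProd G x₀ a e) - 2 * δ ≤
      graphGromovProd G x₀ a b + graphGromovProd G x₀ c e := by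
  have h₁ := h a c b
  have h₂ := h c a e
  have h₃ := h c b e
  have h₄ := h a e b
  rw [graphGromovProd_comm x₀ c b] at h₁ h₃
  rw [graphGromovProd_comm x₀ c a] at h₂
  rw [graphGromovProd_comm x₀ e b] at h₄
  simp only [ge_iff_le, sub_le_iff_le_add, min_le_iff] at h₁ h₂ h₃ h₄
  have := min_le_left (graphGromovProd G x₀ a c + graphGromovProd G x₀ b e)
    (graphGromovProd G x₀ b c + graphGromovProd G x₀ a e)
  have := min_le_right (graphGromovProd G x₀ a c + graphGromovProd G x₀ b e)
    (graphGromovProd G x₀ b c + graphGromovProd G x₀ a e)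
  rcases h₁ with h₁ | h₁ <;> rcases h₂ with h₂ | h₂ <;> rcases h₃ with h₃ | h₃ <;>
    rcases h₄ with h₄ | h₄ <;> linarith

lemma dist_add_dist_le_max (h : GromovHyperbolicAt G x₀ δ) (a b c e : V) :
    (G.dist a b : ℝ) + G.dist c e ≤
      max ((G.dist a c : ℝ) + G.dist b e) ((G.dist b c : ℝ) + G.dist a e) + 4 * δ := by
  have := h.min_sub_le_add a b c e
  simp only [graphGromovProd, sub_le_iff_le_add, min_le_iff] at this
  rw [← sub_le_iff_le_add, le_max_iff]
  rcases this with h' | h'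
  · left; linarith
  · right; linarith

lemma exists_mem_support_two_mul_dist_le (h : GromovHyperbolicAt G x₀ δ) (hconn : G.Connected)
    {u v : V} {p : G.Walk u v} (hp : p.length = G.dist u v) (z : V) :
    ∃ x ∈ p.support,
      2 * (G.dist x z : ℝ) ≤ G.dist u z + G.dist v z - G.dist u v + 8 * δ + 2 := by
  have hu : (G.dist u z : ℝ) ≤ G.dist u v + G.dist v z := by exact_mod_cast hconn.dist_triangle
  have hv : (G.dist v z : ℝ) ≤ G.dist v u + G.dist u z := by exact_mod_cast hconn.dist_triangle
  rw [dist_comm (u := v) (v := u)] at hv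
  -- `r` is where the Gromov product `(v | z)_u` sits on `p`; we round it down to a vertex.
  set r : ℝ := (G.dist u z - G.dist v z + G.dist u v) / 2 with hr
  have hn : ⌊r⌋₊ ≤ p.length := Nat.floor_le_of_le (by rw [hp]; linarith)
  have hfloor_le : (⌊r⌋₊ : ℝ) ≤ r := Nat.floor_le (by linarith)
  have hlt_floor : r < ⌊r⌋₊ + 1 := Nat.lt_floor_add_one r
  set x := p.getVert ⌊r⌋₊
  have hx : x ∈ p.support := p.getVert_mem_support _
  have hux : (G.dist u x : ℝ) = ⌊r⌋₊ := by exact_mod_cast p.dist_getVert_of_le_length hp hn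
  have hsplit : (G.dist u x : ℝ) + G.dist x v = G.dist u v := by
    exact_mod_cast p.dist_add_dist_of_mem_support hp hx
  have hfour := h.dist_add_dist_le_max x z u v
  rw [dist_comm (u := x) (v := u), dist_comm (u := z) (v := v), dist_comm (u := z) (v := u)]
    at hfour
  have hmax : max ((G.dist u x : ℝ) + G.dist v z) ((G.dist u z : ℝ) + G.dist x v) ≤
      (G.dist u z + G.dist v z + G.dist u v) / 2 + 1 := max_le (by linarith) (by linarith)
  exact ⟨x, hx, by linarith⟩

lemma abs_sub_graphGromovProd_le (h : GromovHyperbolicAt G x₀ δ) (hconn : G.Connected)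
    {v a b : V} (hab : G.dist x₀ v ≤ graphGromovProd G x₀ a b) :
    |graphGromovProd G x₀ v a - graphGromovProd G x₀ v b| ≤ δ := by
  have key : ∀ a b, G.dist x₀ v ≤ graphGromovProd G x₀ a b →
      graphGromovProd G x₀ v a - δ ≤ graphGromovProd G x₀ v b := fun a b hab ↦ by
    have := h v a b
    rw [min_eq_left ((hconn.graphGromovProd_le_dist x₀ v a).trans hab)] at this
    linarith
  rw [abs_le]
  constructor <;> linarith [key a b hab, key b a (by rwa [graphGromovProd_comm])]

lemma eventually_abs_sub_le (h : GromovHyperbolicAt G x₀ δ) (hconn : G.Connected) {w : ℕ → V}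
    (hw : ∀ C : ℝ, ∃ N : ℕ, ∀ m n : ℕ, N ≤ m → N ≤ n → C ≤ graphGromovProd G x₀ (w m) (w n))
    {v : V} {a : ℝ}
    (hv : MapClusterPt a atTop fun n ↦ (G.dist v (w n) : ℝ) - G.dist x₀ (w n)) :
    ∀ᶠ n in atTop, |a - ((G.dist v (w n) : ℝ) - G.dist x₀ (w n))| ≤ 2 * δ := by
  obtain ⟨N, hN⟩ := hw (G.dist x₀ v)
  have hb : ∀ n, (G.dist v (w n) : ℝ) - G.dist x₀ (w n) =
      G.dist x₀ v - 2 * graphGromovProd G x₀ v (w n) := fun n ↦ by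
    rw [graphGromovProd]; ring
  filter_upwards [eventually_ge_atTop N] with n hn
  rw [← Real.dist_eq, ← Metric.mem_closedBall]
  refine Metric.isClosed_closedBall.mem_of_mapClusterPt hv ?_
  filter_upwards [eventually_ge_atTop N] with k hk
  have := h.abs_sub_graphGromovProd_le hconn (hN k n hk hn)
  rw [Metric.mem_closedBall, Real.dist_eq, hb, hb, sub_sub_sub_cancel_left, ← mul_sub, abs_mul,
    abs_two, abs_sub_comm]
  linarith

end GromovHyperbolicAt

end SimpleGraph

open SimpleGraph in
theorem min_busemann_along_geodesic_general
    {V : Type*} (G : SimpleGraph V) (hconn : G.Connected)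
    (x₀ : V) (δ : ℝ)
    (hhyp : ∀ x y z : V, graphGromovProd G x₀ x z ≥
      min (graphGromovProd G x₀ x y) (graphGromovProd G x₀ y z) - δ)
    (w : ℕ → V)
    (hw : ∀ C : ℝ, ∃ N : ℕ, ∀ m n : ℕ, N ≤ m → N ≤ n →
      C ≤ graphGromovProd G x₀ (w m) (w n))
    (lam : V → ℝ)
    (hlam : ∀ v : V, MapClusterPt (lam v) atTop
      (fun n => (G.dist v (w n) : ℝ) - (G.dist x₀ (w n) : ℝ))) :
    ∃ c : ℝ, 0 < c ∧ ∀ (u v : V) (p : G.Walk u v), p.length = G.dist u v →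
      ∀ m : ℝ, (∀ x ∈ p.support, m ≤ lam x) → (∃ x ∈ p.support, lam x = m) →
        |m - (lam u + lam v - (G.dist u v : ℝ)) / 2| < c := by
  have hG : G.GromovHyperbolicAt x₀ δ := hhyp
  refine ⟨8 * δ + 2, by linarith [hG.nonneg], ?_⟩
  rintro u v p hp _ hmin ⟨y, hy, rfl⟩
  obtain ⟨N, hN⟩ : ∃ N, ∀ x ∈ p.support,
      |lam x - ((G.dist x (w N) : ℝ) - G.dist x₀ (w N))| ≤ 2 * δ :=
    ((eventually_all_finite p.support.finite_toSet).2 fun x _ ↦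
      hG.eventually_abs_sub_le hconn hw (hlam x)).exists
  obtain ⟨x, hx, hxz⟩ := hG.exists_mem_support_two_mul_dist_le hconn hp (w N)
  have hyz := p.dist_add_dist_le_of_mem_support hconn hp hy (w N)
  have hu := abs_le.1 (hN u p.start_mem_support)
  have hv := abs_le.1 (hN v p.end_mem_support)
  have hx' := abs_le.1 (hN x hx)
  have hy' := abs_le.1 (hN y hy)
  rw [abs_lt]
  constructor <;> linarith [hmin x hx]

/-- Let `Γ` be a connected Gromov hyperbolic graph of bounded degree, `ω ∈ ∂Γ` a
boundary point given by a Gromov sequence `w`, and `λ v = β_ω(v, x₀)` the Busemann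
function (a partial limit of `d(v, w n) − d(x₀, w n)`).  For vertices `u, v` let
`ℓ(u,v)` be the minimal value of `λ` along a geodesic from `u` to `v`.  Then there
is a constant `c > 0`, independent of `u`, `v` and the chosen geodesics, with
`|ℓ(u,v) − ℓ_{ω,x₀}(u,v)| < c`, where
`ℓ_{ω,x₀}(u,v) = ½(β_ω(u,x₀) + β_ω(v,x₀) − d(u,v))`. -/
theorem min_busemann_along_geodesic
    {V : Type*} (G : SimpleGraph V) (hconn : G.Connected)
    (D : ℕ) (hdeg : ∀ v : V, (G.neighborSet v).ncard ≤ D)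
    (x₀ : V) (δ : ℝ) (hδ : 0 ≤ δ)
    (hhyp : ∀ x y z : V, graphGromovProd G x₀ x z ≥
      min (graphGromovProd G x₀ x y) (graphGromovProd G x₀ y z) - δ)
    (w : ℕ → V)
    (hw : ∀ C : ℝ, ∃ N : ℕ, ∀ m n : ℕ, N ≤ m → N ≤ n →
      C ≤ graphGromovProd G x₀ (w m) (w n))
    (lam : V → ℝ)
    (hlam : ∀ v : V, MapClusterPt (lam v) atTop
      (fun n => (G.dist v (w n) : ℝ) - (G.dist x₀ (w n) : ℝ))) :
    ∃ c : ℝ, 0 < c ∧ ∀ (u v : V) (p : G.Walk u v), p.length = G.dist u v →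
      ∀ m : ℝ, (∀ x ∈ p.support, m ≤ lam x) → (∃ x ∈ p.support, lam x = m) →
        |m - (lam u + lam v - (G.dist u v : ℝ)) / 2| < c :=
  min_busemann_along_geodesic_general G hconn x₀ δ hhyp w hw lam hlam
end
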